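/- arXiv:2411.17885 — 2 statements merged into one kernel-verified Lean document; each statement's English description precedes it below -/
import Mathlib

section
/- If G is a 3-connected 2-cyclic simple graph on n ≥ 6 vertices, then every vertex of degree 3 in G has at least two neighbors of degree at least 5. -/
/-- `G` is `k`-connected: more than `k` vertices, and removing fewer than `k`
vertices leaves a connected graph. -/
def SimpleGraph.KConnected {V : Type*} [Fintype V] (k : ℕ) (G : SimpleGraph V) : Prop :=
  k < Fintype.card V ∧ ∀ X : Set V, X.ncard < k → (G.induce (Xᶜ : Set V)).Connected
/-- The neighborhood of a vertex set `S`: vertices outside `S` with a neighbor in `S`. -/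
def SimpleGraph.setNbhd {V : Type*} (G : SimpleGraph V) (S : Set V) : Set V :=
  {v | v ∉ S ∧ ∃ u ∈ S, G.Adj u v}

/-- `G` is `k`-cyclic: every nonempty vertex set of size at most `k` is dominating
or has a cycle in its neighborhood. -/
def SimpleGraph.KCyclic {V : Type*} (k : ℕ) (G : SimpleGraph V) : Prop :=
  ∀ S : Set V, S.Nonempty → S.ncard ≤ k →
    S ∪ G.setNbhd S = Set.univ ∨ ¬ (G.induce (G.setNbhd S)).IsAcyclic

/-!
Suppose `a ≠ b` are neighbours of degree at most 4 of a degree-3 vertex `v`. Whenever `|S| ≤ 2` and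
`|N(S)| ≤ 3`, the set `S ∪ N(S)` has at most 5 < n vertices, so 2-cyclicity puts a cycle, i.e. a
triangle, on `N(S)`. For `S = {v}`, `{v, a}`, `{v, b}` this makes `N(v)`, `N(a) - v` and
`N(b) - v` triangles, whence `P := N(a) - {v, b} = N(b) - {v, a}` has two vertices. Then
`N({a, b}) ⊆ {v} ∪ P` is a triangle as well, so `v` is adjacent to `P` and
`N(v) ⊇ {a, b} ∪ P` has four vertices.
-/

namespace SimpleGraph

variable {V : Type*} {G : SimpleGraph V}

theorem eq_top_of_card_le_three_of_not_isAcyclic {W : Type*} [Fintype W] {H : SimpleGraph W}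
    (hW : Fintype.card W ≤ 3) (h : ¬ H.IsAcyclic) : H = ⊤ ∧ Fintype.card W = 3 := by
  classical
  obtain ⟨u, c, hc⟩ : ∃ u, ∃ c : H.Walk u u, c.IsCycle := by simpa [IsAcyclic] using h
  have hlen : c.length ≤ Fintype.card W := by
    simpa [List.length_tail, c.length_support] using hc.support_nodup.length_le_card
  have hc3 := hc.three_le_length
  obtain ⟨s, hs⟩ := is3Clique_iff_exists_cycle_length_three.mpr ⟨u, c, hc, by omega⟩
  have hcard : Fintype.card W = 3 := by omega
  have hs_univ : s = Finset.univ := Finset.eq_univ_of_card s (hs.card_eq.trans hcard.symm)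
  refine ⟨isClique_univ.mp ?_, hcard⟩
  simpa [hs_univ] using hs.isClique

theorem isClique_of_not_isAcyclic_induce {S : Set V} (hS : S.Finite) (h3 : S.ncard ≤ 3)
    (h : ¬ (G.induce S).IsAcyclic) : G.IsClique S ∧ S.ncard = 3 := by
  have := hS.fintype
  have hcard : Fintype.card S = S.ncard := by
    rw [← Nat.card_eq_fintype_card, Nat.card_coe_set_eq]
  obtain ⟨htop, h3'⟩ := eq_top_of_card_le_three_of_not_isAcyclic (hcard ▸ h3) h
  exact ⟨induce_eq_top.mp htop, hcard ▸ h3'⟩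

theorem KCyclic.isClique_setNbhd [Fintype V] {k : ℕ} (hG : G.KCyclic k) {S : Set V}
    (hS : S.Nonempty) (hSk : S.ncard ≤ k) (hN : (G.setNbhd S).ncard ≤ 3)
    (hV : k + 3 < Fintype.card V) :
    G.IsClique (G.setNbhd S) ∧ (G.setNbhd S).ncard = 3 := by
  refine isClique_of_not_isAcyclic_induce (Set.toFinite _) hN
    ((hG S hS hSk).resolve_left fun hdom => ?_)
  have := Set.ncard_union_le S (G.setNbhd S)
  rw [hdom, Set.ncard_univ, Nat.card_eq_fintype_card] at this
  omega

theorem setNbhd_singleton (v : V) : G.setNbhd {v} = G.neighborSet v := by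
  ext u
  simp only [setNbhd, Set.mem_singleton_iff, exists_eq_left, mem_neighborSet]
  exact ⟨And.right, fun h => ⟨h.ne', h⟩⟩

theorem setNbhd_pair (a b : V) :
    G.setNbhd {a, b} = (G.neighborSet a ∪ G.neighborSet b) \ {a, b} := by
  ext u
  simp only [setNbhd, Set.mem_ofPred_eq, Set.mem_insert_iff, Set.mem_singleton_iff,
    exists_eq_or_imp, exists_eq_left, Set.mem_sdiff, Set.mem_union, mem_neighborSet]
  tauto

theorem neighborSet_sdiff_subset_of_isClique {v a b : V} (hab : G.Adj a b) (hbv : b ≠ v)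
    (hC : G.IsClique (G.neighborSet a \ {v})) :
    (G.neighborSet a \ {v}) \ {b} ⊆ (G.neighborSet b \ {v}) \ {a} :=
  fun _ ⟨⟨hau, huv⟩, hub⟩ => ⟨⟨hC ⟨hab, hbv⟩ ⟨hau, huv⟩ (Ne.symm hub), huv⟩, hau.ne'⟩

section TwoCyclic

variable [Fintype V] (h2 : G.KCyclic 2) (hV : 5 < Fintype.card V) {v a b : V}
  (hv : (G.neighborSet v).ncard ≤ 3)
include h2 hV hv

theorem KCyclic.isClique_neighborSet : G.IsClique (G.neighborSet v) := by
  rw [← setNbhd_singleton]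
  exact (h2.isClique_setNbhd (Set.singleton_nonempty v) (by simp)
    (by rwa [setNbhd_singleton]) hV).1

theorem KCyclic.isClique_neighborSet_sdiff (hva : G.Adj v a)
    (ha : (G.neighborSet a).ncard ≤ 4) :
    G.IsClique (G.neighborSet a \ {v}) ∧ (G.neighborSet a \ {v}).ncard = 3 := by
  have hclique := h2.isClique_neighborSet hV hv
  have hnbhd : G.setNbhd {v, a} = G.neighborSet a \ {v} := by
    rw [setNbhd_pair]
    ext u
    simp only [Set.mem_sdiff, Set.mem_union, Set.mem_insert_iff, Set.mem_singleton_iff,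
      mem_neighborSet, not_or]
    constructor
    · rintro ⟨hvu | hau, hne_v, hne_a⟩
      · exact ⟨hclique hva hvu (Ne.symm hne_a), hne_v⟩
      · exact ⟨hau, hne_v⟩
    · rintro ⟨hau, hne_v⟩
      exact ⟨Or.inr hau, hne_v, hau.ne'⟩
  rw [← hnbhd]
  refine h2.isClique_setNbhd (Set.insert_nonempty v {a})
    ((Set.ncard_insert_le _ _).trans (by simp)) ?_ hV
  rw [hnbhd, Set.ncard_sdiff_singleton_of_mem ((G.mem_neighborSet a v).mpr hva.symm)]
  omega

theorem KCyclic.false_of_adj_of_ncard_neighborSet_le_four (hva : G.Adj v a) (hvb : G.Adj v b)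
    (hab : a ≠ b) (ha : (G.neighborSet a).ncard ≤ 4) (hb : (G.neighborSet b).ncard ≤ 4) :
    False := by
  have hadj : G.Adj a b := h2.isClique_neighborSet hV hv hva hvb hab
  obtain ⟨hCa, hCa3⟩ := h2.isClique_neighborSet_sdiff hV hv hva ha
  obtain ⟨hCb, -⟩ := h2.isClique_neighborSet_sdiff hV hv hvb hb
  set P := (G.neighborSet a \ {v}) \ {b} with hP_def
  have hP : P = (G.neighborSet b \ {v}) \ {a} :=
    (neighborSet_sdiff_subset_of_isClique hadj hvb.ne' hCa).antisymm
      (neighborSet_sdiff_subset_of_isClique hadj.symm hva.ne' hCb)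
  have hP2 : P.ncard = 2 := by
    rw [hP_def, Set.ncard_sdiff_singleton_of_mem (show b ∈ G.neighborSet a \ {v} from
      ⟨hadj, hvb.ne'⟩), hCa3]
  have hnbhd : G.setNbhd {a, b} ⊆ insert v P := by
    rw [setNbhd_pair]
    rintro u ⟨hu, hne⟩
    simp only [Set.mem_insert_iff, Set.mem_singleton_iff, not_or] at hne
    by_cases huv : u = v
    · exact Or.inl huv
    · rcases hu with hau | hbu
      · exact Or.inr ⟨⟨hau, huv⟩, hne.2⟩
      · exact Or.inr (hP ▸ ⟨⟨hbu, huv⟩, hne.1⟩)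
  have hN3 : (G.setNbhd {a, b}).ncard ≤ 3 :=
    (Set.ncard_le_ncard hnbhd).trans ((Set.ncard_insert_le _ _).trans (by omega))
  obtain ⟨hC, -⟩ :=
    h2.isClique_setNbhd (Set.insert_nonempty a {b}) (Set.ncard_pair hab).le hN3 hV
  have hv_mem : v ∈ G.setNbhd {a, b} := ⟨by simp [hva.ne, hvb.ne], a, by simp, hva.symm⟩
  have hP_sub : P ⊆ G.neighborSet v := fun u ⟨⟨hau, huv⟩, hub⟩ =>
    hC hv_mem ⟨by simp [hau.ne', hub], a, by simp, hau⟩ (Ne.symm huv)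
  have h4 : (insert a (insert b P)).ncard = 4 := by
    rw [Set.ncard_insert_of_notMem (by simp [hab, hP_def]),
      Set.ncard_insert_of_notMem (by simp [hP_def]), hP2]
  have : (insert a (insert b P)).ncard ≤ (G.neighborSet v).ncard :=
    Set.ncard_le_ncard (Set.insert_subset hva (Set.insert_subset hvb hP_sub))
  omega

end TwoCyclic

end SimpleGraph

theorem stmt_11_general {V : Type*} [Fintype V] (G : SimpleGraph V)
    (h2 : G.KCyclic 2) (hn : 6 ≤ Fintype.card V) :
    ∀ v : V, (G.neighborSet v).ncard = 3 →
      2 ≤ {u | u ∈ G.neighborSet v ∧ 5 ≤ (G.neighborSet u).ncard}.ncard := by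
  intro v hv
  set L := {u | u ∈ G.neighborSet v ∧ (G.neighborSet u).ncard ≤ 4}
  have hL : L.ncard ≤ 1 := (Set.ncard_le_one (Set.toFinite L)).mpr fun a ha b hb =>
    by_contra fun hab =>
      h2.false_of_adj_of_ncard_neighborSet_le_four (by omega) hv.le ha.1 hb.1 hab ha.2 hb.2
  have hhigh :
      {u | u ∈ G.neighborSet v ∧ 5 ≤ (G.neighborSet u).ncard} = G.neighborSet v \ L := by
    ext u
    simp only [L, Set.mem_sdiff, Set.mem_ofPred_eq, not_and, not_le]
    exact ⟨fun ⟨hu, h5⟩ => ⟨hu, fun _ => h5⟩, fun ⟨hu, h5⟩ => ⟨hu, h5 hu⟩⟩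
  rw [hhigh, Set.ncard_sdiff fun _ hu => hu.1]
  omega

/-- In a 3-connected 2-cyclic graph on `n ≥ 6` vertices, every degree-3 vertex has
at least two neighbors of degree at least 5. -/
theorem stmt_11 {V : Type*} [Fintype V] (G : SimpleGraph V)
    (h3 : G.KConnected 3) (h2 : G.KCyclic 2) (hn : 6 ≤ Fintype.card V) :
    ∀ v : V, (G.neighborSet v).ncard = 3 →
      2 ≤ {u | u ∈ G.neighborSet v ∧ 5 ≤ (G.neighborSet u).ncard}.ncard :=
  stmt_11_general G h2 hn
end

section
/- There are infinitely many natural numbers n for which there exists a 4-connected 1-cyclic simple graph on n vertices with exactly 2n edges. -/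
/-! ### Auxiliary: a ring of `K₄` blocks -/

set_option linter.unusedSectionVars false

/-- The external partner of a vertex: `(a,0) ↔ (a-1,2)`, `(a,1) ↔ (a-1,3)`. -/
def extV (m : ℕ) (p : ZMod m × Fin 4) : ZMod m × Fin 4 :=
  (p.1 + (if p.2.val < 2 then -1 else 1), ⟨(p.2.val + 2) % 4, by omega⟩)

lemma extV_invol (m : ℕ) (p : ZMod m × Fin 4) : extV m (extV m p) = p := by
  obtain ⟨a, x⟩ := p
  have hx := x.isLt
  refine Prod.ext ?_ ?_
  · show ((a + if x.val < 2 then -1 else 1) + if (x.val + 2) % 4 < 2 then -1 else 1) = a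
    by_cases h : x.val < 2
    · have h2 : ¬ ((x.val + 2) % 4 < 2) := by omega
      simp [h, h2]
    · have h2 : (x.val + 2) % 4 < 2 := by omega
      simp [h, h2]
  · show (⟨((x.val + 2) % 4 + 2) % 4, _⟩ : Fin 4) = x
    ext
    show ((x.val + 2) % 4 + 2) % 4 = x.val
    omega

lemma extV_snd_ne (m : ℕ) (p : ZMod m × Fin 4) : (extV m p).2 ≠ p.2 := by
  intro h
  have := congrArg Fin.val h
  simp [extV] at this
  omega

/-- A ring of `m` blocks `K₄`, consecutive blocks joined by two edges. -/
def blockRing (m : ℕ) : SimpleGraph (ZMod m × Fin 4) where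
  Adj u v := (u.1 = v.1 ∧ u.2 ≠ v.2) ∨ v = extV m u ∨ u = extV m v
  symm := by
    constructor
    intro u v h
    rcases h with ⟨h1, h2⟩ | h | h
    · exact Or.inl ⟨h1.symm, h2.symm⟩
    · exact Or.inr (Or.inr h)
    · exact Or.inr (Or.inl h)
  loopless := by
    constructor
    intro u h
    rcases h with ⟨_, h2⟩ | h | h
    · exact h2 rfl
    all_goals exact extV_snd_ne m u (by rw [← h])

instance (m : ℕ) : DecidableRel (blockRing m).Adj := fun _ _ =>
  inferInstanceAs (Decidable (_ ∨ _ ∨ _))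

section deg
variable {m : ℕ} [NeZero m]

lemma one_ne_zero_zmod (hm : 2 ≤ m) : (1 : ZMod m) ≠ 0 := by
  haveI : Fact (1 < m) := ⟨by omega⟩
  exact one_ne_zero

lemma extV_fst_ne (hm : 2 ≤ m) (u : ZMod m × Fin 4) : (extV m u).1 ≠ u.1 := by
  simp only [extV]
  split
  · intro h
    have : (-1 : ZMod m) = 0 := by linear_combination h
    exact one_ne_zero_zmod hm (by linear_combination -this)
  · intro h
    exact one_ne_zero_zmod hm (by linear_combination h)

lemma blockRing_neighborFinset (u : ZMod m × Fin 4) :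
    (blockRing m).neighborFinset u =
      insert (extV m u) ((Finset.univ.filter (fun y => y ≠ u.2)).image (fun y => (u.1, y))) := by
  ext v
  simp only [SimpleGraph.mem_neighborFinset, Finset.mem_insert, Finset.mem_image,
    Finset.mem_filter, Finset.mem_univ, true_and]
  constructor
  · rintro (⟨h1, h2⟩ | h | h)
    · exact Or.inr ⟨v.2, Ne.symm h2, by rw [h1]⟩
    · exact Or.inl h
    · exact Or.inl (by rw [h, extV_invol])
  · rintro (h | ⟨y, hy, rfl⟩)
    · exact Or.inr (Or.inl h)
    · exact Or.inl ⟨rfl, Ne.symm hy⟩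

lemma blockRing_degree (hm : 2 ≤ m) (u : ZMod m × Fin 4) : (blockRing m).degree u = 4 := by
  rw [SimpleGraph.degree, blockRing_neighborFinset u]
  rw [Finset.card_insert_of_notMem]
  · rw [Finset.card_image_of_injective _ (fun y z h => (Prod.ext_iff.mp h).2)]
    rw [Finset.filter_ne', Finset.card_erase_of_mem (Finset.mem_univ _)]
    simp
  · simp only [Finset.mem_image, Finset.mem_filter, Finset.mem_univ, true_and]
    rintro ⟨y, _, h⟩
    exact extV_fst_ne hm u (by rw [← h])

lemma blockRing_card_edges (hm : 2 ≤ m) :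
    ((blockRing m).edgeFinset.card : ℕ) = 2 * (4 * m) := by
  have h := SimpleGraph.sum_degrees_eq_twice_card_edges (blockRing m)
  have h2 : ∑ v, (blockRing m).degree v = 4 * (4 * m) := by
    rw [Finset.sum_congr rfl (fun v _ => blockRing_degree hm v)]
    simp [Finset.card_univ, ZMod.card m]
    ring
  omega

end deg

/-! ### Triangles give cycles -/

lemma triangle_isCycle {V : Type*} {G : SimpleGraph V} {a b c : V}
    (hab : G.Adj a b) (hbc : G.Adj b c) (hca : G.Adj c a) (hac : a ≠ c) :
    (SimpleGraph.Walk.cons hab (SimpleGraph.Walk.cons hbc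
      (SimpleGraph.Walk.cons hca SimpleGraph.Walk.nil))).IsCycle := by
  have h1 := hab.ne
  have h2 := hbc.ne
  simp [SimpleGraph.Walk.isCycle_def, SimpleGraph.Walk.isTrail_def, Sym2.eq_iff]
  tauto

lemma not_acyclic_of_triangle {V : Type*} {G : SimpleGraph V} {a b c : V}
    (hab : G.Adj a b) (hbc : G.Adj b c) (hca : G.Adj c a) (hac : a ≠ c) :
    ¬ G.IsAcyclic := fun h => h _ (triangle_isCycle hab hbc hca hac)

/-! ### Connectivity of the block ring minus at most 3 vertices -/

section conn
variable {m : ℕ} [NeZero m] (X : Set (ZMod m × Fin 4))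

/-- junction `k` (between block `k` and `k+1`) is blocked by `X` -/
def Closed (k : ZMod m) : Prop :=
  ((k, (2:Fin 4)) ∈ X ∨ (k+1, (0:Fin 4)) ∈ X) ∧ ((k, (3:Fin 4)) ∈ X ∨ (k+1, (1:Fin 4)) ∈ X)

variable (hX : X.ncard ≤ 3)

include hX in
lemma block_survivor (b : ZMod m) : ∃ x : Fin 4, (b, x) ∉ X := by
  by_contra h
  push_neg at h
  have hsub : (fun x : Fin 4 => (b, x)) '' Set.univ ⊆ X := by
    rintro _ ⟨x, -, rfl⟩; exact h x
  have hinj : Function.Injective (fun x : Fin 4 => (b, x)) :=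
    fun x y hxy => (Prod.ext_iff.mp hxy).2
  have h4 : ((fun x : Fin 4 => (b, x)) '' Set.univ).ncard = 4 := by
    rw [Set.ncard_image_of_injective _ hinj, Set.ncard_univ]
    simp
  have := Set.ncard_le_ncard hsub (Set.toFinite X)
  omega

include hX in
lemma at_most_one_closed {i j : ZMod m} (hij : i ≠ j) (hi : Closed X i) (hj : Closed X j) :
    False := by
  obtain ⟨hi1, hi2⟩ := hi
  obtain ⟨hj1, hj2⟩ := hj
  have hij1 : i + 1 ≠ j + 1 := fun h => hij (by linear_combination h)
  have key : ∀ v1 v2 v3 v4 : ZMod m × Fin 4, v1 ∈ X → v2 ∈ X → v3 ∈ X → v4 ∈ X →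
      v1 ≠ v2 → v1 ≠ v3 → v1 ≠ v4 → v2 ≠ v3 → v2 ≠ v4 → v3 ≠ v4 → False := by
    intro v1 v2 v3 v4 m1 m2 m3 m4 d12 d13 d14 d23 d24 d34
    have hsub : (({v1, v2, v3, v4} : Finset _) : Set _) ⊆ X := by
      intro v hv
      simp only [Finset.coe_insert, Set.mem_insert_iff, Finset.coe_singleton,
        Set.mem_singleton_iff] at hv
      rcases hv with rfl | rfl | rfl | rfl <;> assumption
    have hcard : ({v1, v2, v3, v4} : Finset _).card = 4 := by
      rw [Finset.card_insert_of_notMem (by simp [d12, d13, d14]),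
        Finset.card_insert_of_notMem (by simp [d23, d24]),
        Finset.card_insert_of_notMem (by simp [d34]), Finset.card_singleton]
    have := Set.ncard_le_ncard hsub (Set.toFinite X)
    rw [Set.ncard_coe_finset, hcard] at this
    omega
  rcases hi1 with h1 | h1 <;> rcases hi2 with h2 | h2 <;>
    rcases hj1 with h3 | h3 <;> rcases hj2 with h4 | h4 <;>
    exact key _ _ _ _ h1 h2 h3 h4
      (by simp [Prod.ext_iff]) (by simp [Prod.ext_iff, hij, hij1])
      (by simp [Prod.ext_iff]) (by simp [Prod.ext_iff])
      (by simp [Prod.ext_iff, hij, hij1]) (by simp [Prod.ext_iff])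
end conn

section reach
variable {m : ℕ} [NeZero m] {X : Set (ZMod m × Fin 4)}

abbrev HG (X : Set (ZMod m × Fin 4)) := (blockRing m).induce Xᶜ

lemma induce_adj' {u w : ↥(Xᶜ)} (h : (blockRing m).Adj ↑u ↑w) : (HG X).Adj u w := h

lemma reach_same {u w : ↥(Xᶜ)} (h : (u : ZMod m × Fin 4).1 = (w : ZMod m × Fin 4).1) :
    (HG X).Reachable u w := by
  by_cases huw : u = w
  · exact huw ▸ SimpleGraph.Reachable.refl u
  · refine SimpleGraph.Adj.reachable (induce_adj' (Or.inl ⟨h, ?_⟩))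
    intro h2
    exact huw (Subtype.ext (Prod.ext h h2))

lemma extV_two (k : ZMod m) : extV m (k, (2 : Fin 4)) = (k + 1, (0 : Fin 4)) := by
  refine Prod.ext ?_ (Fin.ext ?_)
  · show (k + if ((2:Fin 4)).val < 2 then -1 else 1) = k + 1
    rw [if_neg (by decide)]
  · show (((2:Fin 4)).val + 2) % 4 = ((0:Fin 4)).val
    decide

lemma extV_three (k : ZMod m) : extV m (k, (3 : Fin 4)) = (k + 1, (1 : Fin 4)) := by
  refine Prod.ext ?_ (Fin.ext ?_)
  · show (k + if ((3:Fin 4)).val < 2 then -1 else 1) = k + 1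
    rw [if_neg (by decide)]
  · show (((3:Fin 4)).val + 2) % 4 = ((1:Fin 4)).val
    decide

lemma cross {k : ZMod m} (hk : ¬ Closed X k) {u w : ↥(Xᶜ)}
    (hu : (u : ZMod m × Fin 4).1 = k) (hw : (w : ZMod m × Fin 4).1 = k + 1) :
    (HG X).Reachable u w := by
  rcases not_and_or.mp hk with h | h <;> push_neg at h <;> obtain ⟨hp, hq⟩ := h
  · have hpq : (blockRing m).Adj (k, (2:Fin 4)) (k+1, (0:Fin 4)) :=
      Or.inr (Or.inl (extV_two k).symm)
    exact ((reach_same (u := u) (w := ⟨(k, 2), hp⟩) hu).trans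
      (SimpleGraph.Adj.reachable (induce_adj' (u := ⟨(k,2),hp⟩) (w := ⟨(k+1,0),hq⟩) hpq))).trans
      (reach_same (by simpa using hw.symm))
  · have hpq : (blockRing m).Adj (k, (3:Fin 4)) (k+1, (1:Fin 4)) :=
      Or.inr (Or.inl (extV_three k).symm)
    exact ((reach_same (u := u) (w := ⟨(k, 3), hp⟩) hu).trans
      (SimpleGraph.Adj.reachable (induce_adj' (u := ⟨(k,3),hp⟩) (w := ⟨(k+1,1),hq⟩) hpq))).trans
      (reach_same (by simpa using hw.symm))

end reach

section main
variable {m : ℕ} [NeZero m]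

lemma blockRing_induce_connected (X : Set (ZMod m × Fin 4)) (hX : X.ncard ≤ 3) :
    ((blockRing m).induce (Xᶜ : Set (ZMod m × Fin 4))).Connected := by
  obtain ⟨j₀, hj₀⟩ : ∃ j₀ : ZMod m, ∀ k, k ≠ j₀ → ¬ Closed X k := by
    by_cases h : ∃ j, Closed X j
    · obtain ⟨j, hj⟩ := h
      exact ⟨j, fun k hk hck => at_most_one_closed X hX hk hck hj⟩
    · push_neg at h
      exact ⟨0, fun k _ => h k⟩
  obtain ⟨x₀, hx₀⟩ := block_survivor X hX (j₀ + 1)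
  set p₀ : ↥(Xᶜ) := ⟨(j₀ + 1, x₀), hx₀⟩ with hp₀
  have claim : ∀ t : ℕ, t < m → ∀ u : ↥(Xᶜ),
      (u : ZMod m × Fin 4).1 = j₀ + 1 + (t : ZMod m) → (HG X).Reachable u p₀ := by
    intro t
    induction t with
    | zero =>
      intro _ u hu
      exact reach_same (by simpa using hu)
    | succ t ih =>
      intro ht u hu
      have htm : t < m := by omega
      have hk : j₀ + 1 + (t : ZMod m) ≠ j₀ := by
        intro h
        have h1 : ((t + 1 : ℕ) : ZMod m) = 0 := by push_cast; linear_combination h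
        have h2 := (ZMod.natCast_eq_zero_iff _ _).mp h1
        have := Nat.le_of_dvd (by omega) h2
        omega
      obtain ⟨x, hx⟩ := block_survivor X hX (j₀ + 1 + (t : ZMod m))
      have hcross := cross (hj₀ _ hk) (u := ⟨(j₀ + 1 + (t : ZMod m), x), hx⟩) (w := u)
        rfl (by rw [hu]; push_cast; ring)
      exact hcross.symm.trans (ih htm _ rfl)
  rw [SimpleGraph.connected_iff_exists_forall_reachable]
  refine ⟨p₀, fun w => ?_⟩
  have hlt : ((w : ZMod m × Fin 4).1 - (j₀ + 1)).val < m := ZMod.val_lt _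
  refine (claim _ hlt w ?_).symm
  rw [ZMod.natCast_val, ZMod.cast_id]
  ring
end main

/-! ### Transfer to `Fin (4*m)` and the final theorem -/

/-- There are infinitely many `n` admitting a 4-connected 1-cyclic graph on `n`
vertices with exactly `2n` edges. -/
theorem stmt_13 : ∀ N : ℕ, ∃ n : ℕ, N ≤ n ∧ ∃ G : SimpleGraph (Fin n),
    G.KConnected 4 ∧ G.KCyclic 1 ∧ G.edgeSet.ncard = 2 * n := by
  intro N
  set m := max 2 N with hmdef
  have hm : 2 ≤ m := le_max_left _ _
  haveI : NeZero m := ⟨by omega⟩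
  refine ⟨4 * m, by have := le_max_right 2 N; omega, ?_⟩
  have hcard : Fintype.card (Fin (4 * m)) = Fintype.card (ZMod m × Fin 4) := by
    simp [ZMod.card m]
    ring
  let e : Fin (4 * m) ≃ ZMod m × Fin 4 := Fintype.equivOfCardEq hcard
  let G : SimpleGraph (Fin (4 * m)) := (blockRing m).comap e
  have hGadj : ∀ u v, G.Adj u v ↔ (blockRing m).Adj (e u) (e v) := fun _ _ => Iff.rfl
  refine ⟨G, ⟨?_, ?_⟩, ?_, ?_⟩
  · -- 4 < card
    simp only [Fintype.card_fin]
    omega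
  · -- connectivity
    intro X hXlt
    set Y : Set (ZMod m × Fin 4) := e.symm ⁻¹' X with hYdef
    have hYX : Y = e '' X := (Equiv.image_eq_preimage_symm e X).symm
    have hY : Y.ncard ≤ 3 := by
      rw [hYX, Set.ncard_image_of_injective _ e.injective]
      omega
    have hconn := blockRing_induce_connected Y hY
    have hmem : ∀ a : Fin (4 * m), a ∈ (Xᶜ : Set (Fin (4 * m))) ↔ e a ∈ (Yᶜ : Set _) := by
      intro a
      simp [hYdef]
    let φ : (G.induce (Xᶜ : Set (Fin (4 * m)))) ≃g ((blockRing m).induce (Yᶜ : Set _)) :=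
      { toEquiv := e.subtypeEquiv hmem
        map_rel_iff' := Iff.rfl }
    exact φ.connected_iff.mpr hconn
  · -- 1-cyclic
    intro S hSne hS1
    have hS : S.ncard = 1 :=
      le_antisymm hS1 ((Set.ncard_pos (Set.toFinite S)).mpr hSne)
    obtain ⟨v, rfl⟩ := Set.ncard_eq_one.mp hS
    refine Or.inr ?_
    -- triangle among the three blockmates of v
    set a : ZMod m := (e v).1
    set x : Fin 4 := (e v).2
    have hev : e v = (a, x) := rfl
    have key : ∀ i : Fin 4, i ≠ 0 →
        e.symm (a, x + i) ∈ G.setNbhd {v} := by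
      intro i hi
      have hxne : x + i ≠ x := by
        intro h
        have : i = 0 := by
          have := congrArg (fun z => z - x) h
          simpa [add_sub_cancel_left] using this
        exact hi this
      constructor
      · intro hmem
        simp only [Set.mem_singleton_iff] at hmem
        have : e v = (a, x + i) := by rw [← hmem]; simp
        rw [hev] at this
        exact hxne (Prod.ext_iff.mp this).2.symm
      · refine ⟨v, rfl, ?_⟩
        show (blockRing m).Adj (e v) (e (e.symm (a, x + i)))
        rw [hev, Equiv.apply_symm_apply]
        exact Or.inl ⟨rfl, fun h => hxne h.symm⟩
    have h1 := key 1 (by decide)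
    have h2 := key 2 (by decide)
    have h3 := key 3 (by decide)
    set T := G.setNbhd {v} with hT
    let u1 : ↥T := ⟨e.symm (a, x + 1), h1⟩
    let u2 : ↥T := ⟨e.symm (a, x + 2), h2⟩
    let u3 : ↥T := ⟨e.symm (a, x + 3), h3⟩
    have hadj : ∀ i j : Fin 4, i ≠ j →
        (blockRing m).Adj (e (e.symm (a, x + i))) (e (e.symm (a, x + j))) := by
      intro i j hij
      simp only [Equiv.apply_symm_apply]
      refine Or.inl ⟨rfl, ?_⟩
      intro h
      exact hij (by
        have := congrArg (fun z => z - x) h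
        simpa [add_sub_cancel_left] using this)
    have h12 : (G.induce T).Adj u1 u2 := hadj 1 2 (by decide)
    have h23 : (G.induce T).Adj u2 u3 := hadj 2 3 (by decide)
    have h31 : (G.induce T).Adj u3 u1 := hadj 3 1 (by decide)
    have hne13 : u1 ≠ u3 := by
      intro h
      have := congrArg (fun z : ↥T => e (z : Fin (4 * m))) h
      simp only [u1, u3, Equiv.apply_symm_apply] at this
      have h2 := (Prod.ext_iff.mp this).2
      have := congrArg (fun z => z - x) h2
      simp only [add_sub_cancel_left] at this
      exact absurd this (by decide)
    exact not_acyclic_of_triangle h12 h23 h31 hne13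
  · -- edge count
    let ψ : G ≃g blockRing m := { toEquiv := e, map_rel_iff' := Iff.rfl }
    have hcongr : Nat.card G.edgeSet = Nat.card (blockRing m).edgeSet :=
      Nat.card_congr ψ.mapEdgeSet
    rw [← Nat.card_coe_set_eq, hcongr, Nat.card_coe_set_eq,
      Set.ncard_eq_toFinset_card']
    have := blockRing_card_edges (m := m) hm
    rw [SimpleGraph.edgeFinset] at this
    convert this using 2
end
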